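/- Let n, k ≤ n, D, t be positive integers and let M be a mask over ground set [n] such that every vertex in V(M) has mask degree at most 2t. Then there exists a mask M' over [n] such that LDUB(n, M) ≤ LDUB(n, M') and |V(M')| ≤ 2t + 2 + 2|M|/t. -/

import Mathlib

/-!
Donating from `v` to `u` (replacing every edge `sv` with `su ∉ M` by `su`) never decreases
`E[Φ(M)^d]`. Pair each set `T` with `u ∈ T`, `v ∉ T` with its image `T'` under the
transposition `(u v)`: the donation adds `δ` edges inside `T` and removes `δ` edges inside
`T'`, and after it the count inside `T'` is still at most the old count inside `T`; so the
pair of counts is spread apart and convexity of `x ↦ x^d` does the rest.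

A donation between two vertices of degree at most `t`, from the one of smaller degree,
keeps all degrees at most `2t` and strictly increases `∑ deg²`. Hence a mask maximising
`∑ deg²` among the masks with `LDUB` at least that of `M`, with `|M|` edges and degrees at
most `2t`, admits no such donation. In it, if `v` has least degree among the vertices of
degree in `[1, t]` and `s` is a neighbour of `v`, every other such vertex is `s` or a
neighbour of `s`, so there are at most `2t + 1` of them; vertices of degree `> t` number at
most `2|M|/t`.
-/

open Finset Filter Asymptotics Real MeasureTheory
open scoped Classical BigOperators

noncomputable section

namespace PlantedCliqueLD

/-- The vertex set `V(M)` of a mask `M` over ground set `[n]`. -/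
def maskVerts {n : ℕ} (M : Finset (Sym2 (Fin n))) : Finset (Fin n) :=
  Finset.univ.filter fun v => ∃ e ∈ M, v ∈ e

/-- The mask degree `deg^M(v)` of a vertex `v`. -/
def maskDeg {n : ℕ} (M : Finset (Sym2 (Fin n))) (v : Fin n) : ℕ :=
  (M.filter fun e => v ∈ e).card

/-- Expectation of `f` under `Clique(n,k)`, the uniform distribution on
subsets of `[n]` of size `k` (identifying a 0/1 vector with its support). -/
def cliqueExp (n k : ℕ) (f : Finset (Fin n) → ℝ) : ℝ :=
  (∑ S ∈ Finset.powersetCard k (Finset.univ : Finset (Fin n)), f S) /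
    ((Finset.powersetCard k (Finset.univ : Finset (Fin n))).card : ℝ)

/-- Expectation of `f` under `Clique(n,k,S)`: uniform over size-`k` subsets of `S`. -/
def cliqueExpCond (n k : ℕ) (S : Finset (Fin n)) (f : Finset (Fin n) → ℝ) : ℝ :=
  (∑ T ∈ Finset.powersetCard k S, f T) / ((Finset.powersetCard k S).card : ℝ)

/-- Both endpoints of the unordered pair `e` lie in `T`. -/
def edgeIn {n : ℕ} (T : Finset (Fin n)) (e : Sym2 (Fin n)) : Prop :=
  ∀ v ∈ e, v ∈ T

/-- `Φ(M) = ∑_{(i,j) ∈ M} Z_i Z_j` where `Z_i` is the indicator of `i ∈ T`. -/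
def Phi {n : ℕ} (M : Finset (Sym2 (Fin n))) (T : Finset (Fin n)) : ℝ :=
  ∑ e ∈ M, if edgeIn T e then (1 : ℝ) else 0

/-- The low-degree likelihood ratio upper bound `LDUB(n,M)` at degree `D`
and clique size `k`:  `1 + ∑_{d=1}^D (1/d!) E[(∑_{(i,j)∈M} Z_i Z_j)^d]`,
where `Z_i = X_i X'_i` for independent `X, X' ~ Clique(n,k)`. -/
def LDUB (n k D : ℕ) (M : Finset (Sym2 (Fin n))) : ℝ :=
  1 + ∑ d ∈ Finset.Icc 1 D, (1 / (Nat.factorial d : ℝ)) *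
    cliqueExp n k fun S => cliqueExp n k fun S' => Phi M (S ∩ S') ^ d

/-- The conditional low-degree likelihood ratio upper bound `Cond(n,M,S)`,
defined as `LDUB` but with `X, X' ~ Clique(n,k,S)`. -/
def CondLDUB (n k D : ℕ) (M : Finset (Sym2 (Fin n))) (S : Finset (Fin n)) : ℝ :=
  1 + ∑ d ∈ Finset.Icc 1 D, (1 / (Nat.factorial d : ℝ)) *
    cliqueExpCond n k S fun X => cliqueExpCond n k S fun X' => Phi M (X ∩ X') ^ d

/-- The set of vertices that donate an edge in `Donate(M, v → u)`:
those `s ∉ {v,u}` with `(s,v) ∈ M` and `(s,u) ∉ M`. -/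
def donorSet {n : ℕ} (M : Finset (Sym2 (Fin n))) (v u : Fin n) : Finset (Fin n) :=
  Finset.univ.filter fun s => s ≠ v ∧ s ≠ u ∧ s(s, v) ∈ M ∧ s(s, u) ∉ M

/-- `Donate(M, v → u)`: for every `s ∈ V(M) \ {v,u}` with `(s,v) ∈ M` and
`(s,u) ∉ M`, remove `(s,v)` and add `(s,u)`. -/
def donate {n : ℕ} (M : Finset (Sym2 (Fin n))) (v u : Fin n) : Finset (Sym2 (Fin n)) :=
  (M \ (donorSet M v u).image fun s => s(s, v)) ∪ (donorSet M v u).image fun s => s(s, u)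

/-- The `±1` value encoded by a Boolean. -/
def signVal (b : Bool) : ℝ := if b then 1 else -1

/-- Expectation of `h` under the (masked) Erdős–Rényi null distribution:
all coordinates independent uniform `±1`.  (Since `h` is only ever applied
through coordinates of the mask, this realizes the marginal `G(n,M)`.) -/
def nullExp (n : ℕ) (h : (Sym2 (Fin n) → ℝ) → ℝ) : ℝ :=
  (∑ A : Sym2 (Fin n) → Bool, h fun e => signVal (A e)) /
    (Fintype.card (Sym2 (Fin n) → Bool) : ℝ)

/-- The planted sample: edges inside the clique `S` are `+1`; all other
coordinates take the independent uniform `±1` values given by `A`. -/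
def plantedSample {n : ℕ} (S : Finset (Fin n)) (A : Sym2 (Fin n) → Bool) :
    Sym2 (Fin n) → ℝ := fun e => if edgeIn S e then 1 else signVal (A e)

/-- Joint expectation of `h(K, Y)` where `K ~ Clique(n,k)` is the planted
clique and `Y` is the planted-clique sample (this realizes `G(n,k,M)` for
functions reading only mask coordinates, jointly with the clique). -/
def plantedJointExp (n k : ℕ) (h : Finset (Fin n) → (Sym2 (Fin n) → ℝ) → ℝ) : ℝ :=
  cliqueExp n k fun S =>
    (∑ A : Sym2 (Fin n) → Bool, h S (plantedSample S A)) /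
      (Fintype.card (Sym2 (Fin n) → Bool) : ℝ)

/-- Expectation of `h(Y)` under the planted clique distribution. -/
def plantedExp (n k : ℕ) (h : (Sym2 (Fin n) → ℝ) → ℝ) : ℝ :=
  plantedJointExp n k fun _ Y => h Y

/-- Variance under the null distribution. -/
def nullVar (n : ℕ) (h : (Sym2 (Fin n) → ℝ) → ℝ) : ℝ :=
  nullExp n fun Y => (h Y - nullExp n h) ^ 2

/-- Variance under the planted distribution. -/
def plantedVar (n k : ℕ) (h : (Sym2 (Fin n) → ℝ) → ℝ) : ℝ :=
  plantedExp n k fun Y => (h Y - plantedExp n k h) ^ 2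

/-- Evaluate a polynomial whose variables are the entries of the mask `M`
on a (full) sample `Y`, reading only the coordinates in `M`. -/
def evalMasked {n : ℕ} (M : Finset (Sym2 (Fin n)))
    (f : MvPolynomial {e : Sym2 (Fin n) // e ∈ M} ℝ) (Y : Sym2 (Fin n) → ℝ) : ℝ :=
  MvPolynomial.eval (fun e => Y e.1) f

lemma pow_add_add_pow_le {x y δ : ℝ} (hy : 0 ≤ y) (hyx : y ≤ x) (hδ : 0 ≤ δ) (d : ℕ) :
    x ^ d + (y + δ) ^ d ≤ (x + δ) ^ d + y ^ d := by
  have hsum : ∑ i ∈ range d, (y + δ) ^ i * y ^ (d - 1 - i) ≤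
      ∑ i ∈ range d, (x + δ) ^ i * x ^ (d - 1 - i) := by
    gcongr with i
    exact pow_nonneg (by linarith) i
  have hy' := geom_sum₂_mul (y + δ) y d
  have hx' := geom_sum₂_mul (x + δ) x d
  rw [add_sub_cancel_left] at hx' hy'
  nlinarith [mul_le_mul_of_nonneg_right hsum hδ]

section CliqueExp

variable {n k : ℕ}

lemma cliqueExp_add (f g : Finset (Fin n) → ℝ) :
    cliqueExp n k (fun S => f S + g S) = cliqueExp n k f + cliqueExp n k g := by
  simp only [cliqueExp, sum_add_distrib, add_div]

lemma cliqueExp_mono {f g : Finset (Fin n) → ℝ} (h : ∀ S, f S ≤ g S) :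
    cliqueExp n k f ≤ cliqueExp n k g := by
  unfold cliqueExp
  gcongr with S
  exact h S

lemma cliqueExp_comp_perm (σ : Equiv.Perm (Fin n)) (f : Finset (Fin n) → ℝ) :
    cliqueExp n k (fun S => f (S.map σ.toEmbedding)) = cliqueExp n k f := by
  unfold cliqueExp
  conv_rhs => rw [← map_univ_equiv σ, powersetCard_map, sum_map, card_map]
  rfl

lemma cliqueExp_inter_le_of_symmetrize (σ : Equiv.Perm (Fin n)) {f g : Finset (Fin n) → ℝ}
    (h : ∀ W, f W + f (W.map σ.toEmbedding) ≤ g W + g (W.map σ.toEmbedding)) :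
    cliqueExp n k (fun S => cliqueExp n k fun S' => f (S ∩ S')) ≤
      cliqueExp n k (fun S => cliqueExp n k fun S' => g (S ∩ S')) := by
  have hinv : ∀ F : Finset (Fin n) → ℝ,
      cliqueExp n k (fun S => cliqueExp n k fun S' => F ((S ∩ S').map σ.toEmbedding)) =
        cliqueExp n k (fun S => cliqueExp n k fun S' => F (S ∩ S')) := by
    intro F
    simp_rw [map_inter]
    rw [← cliqueExp_comp_perm σ (fun S => cliqueExp n k fun S' => F (S ∩ S'))]
    congr 1
    ext S
    exact cliqueExp_comp_perm σ (fun S' => F (S.map σ.toEmbedding ∩ S'))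
  have := cliqueExp_mono (k := k) fun S => cliqueExp_mono (k := k) fun S' => h (S ∩ S')
  simp only [cliqueExp_add, hinv] at this
  linarith

end CliqueExp

section Swap

variable {α : Type*} [DecidableEq α] {u v : α} {T : Finset α}

lemma mem_map_swap_left : u ∈ T.map (Equiv.swap u v).toEmbedding ↔ v ∈ T := by
  rw [mem_map_equiv, Equiv.symm_swap, Equiv.swap_apply_left]

lemma mem_map_swap_right : v ∈ T.map (Equiv.swap u v).toEmbedding ↔ u ∈ T := by
  rw [mem_map_equiv, Equiv.symm_swap, Equiv.swap_apply_right]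

lemma mem_map_swap_of_ne {x : α} (hxu : x ≠ u) (hxv : x ≠ v) :
    x ∈ T.map (Equiv.swap u v).toEmbedding ↔ x ∈ T := by
  rw [mem_map_equiv, Equiv.symm_swap, Equiv.swap_apply_of_ne_of_ne hxu hxv]

lemma map_swap_map_swap :
    (T.map (Equiv.swap u v).toEmbedding).map (Equiv.swap u v).toEmbedding = T := by
  ext x
  simp only [mem_map_equiv, Equiv.symm_swap, Equiv.swap_apply_self]

end Swap

section Donation

variable {n : ℕ} {M : Finset (Sym2 (Fin n))} {u v : Fin n}

lemma edgeIn_mk {T : Finset (Fin n)} {a b : Fin n} : edgeIn T s(a, b) ↔ a ∈ T ∧ b ∈ T := by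
  simp [edgeIn]

lemma Phi_eq_card (M : Finset (Sym2 (Fin n))) (T : Finset (Fin n)) :
    Phi M T = #(M.filter (edgeIn T)) := by
  simp [Phi]

lemma mem_maskVerts_iff {x : Fin n} : x ∈ maskVerts M ↔ 0 < maskDeg M x := by
  simp [maskVerts, maskDeg, Finset.card_pos, Finset.filter_nonempty_iff]

lemma mem_donorSet {s : Fin n} :
    s ∈ donorSet M v u ↔ s ≠ v ∧ s ≠ u ∧ s(s, v) ∈ M ∧ s(s, u) ∉ M := by
  simp [donorSet]

lemma card_filter_star (A : Finset (Fin n)) (w : Fin n) (P : Sym2 (Fin n) → Prop)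
    [DecidablePred P] :
    #((A.image fun s => s(s, w)).filter P) = #(A.filter fun s => P s(s, w)) := by
  rw [filter_image, card_image_of_injective _ fun _ _ => Sym2.congr_left.1]

lemma card_filter_donate_add (P : Sym2 (Fin n) → Prop) [DecidablePred P] :
    #((donate M v u).filter P) + #((donorSet M v u).filter fun s => P s(s, v)) =
      #(M.filter P) + #((donorSet M v u).filter fun s => P s(s, u)) := by
  set X := (donorSet M v u).image fun s => s(s, v)
  set Y := (donorSet M v u).image fun s => s(s, u)
  have hXM : X ⊆ M := by
    intro e he
    obtain ⟨s, hs, rfl⟩ := mem_image.1 he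
    exact (mem_donorSet.1 hs).2.2.1
  have hMY : Disjoint M Y := disjoint_left.2 fun e he he' => by
    obtain ⟨s, hs, rfl⟩ := mem_image.1 he'
    exact (mem_donorSet.1 hs).2.2.2 he
  have hsplit : #(M.filter P) = #((M \ X).filter P) + #(X.filter P) := by
    conv_lhs => rw [← sdiff_union_of_subset hXM]
    rw [filter_union, card_union_of_disjoint (disjoint_filter_filter sdiff_disjoint)]
  rw [← card_filter_star, ← card_filter_star, donate, filter_union,
    card_union_of_disjoint (disjoint_filter_filter (hMY.mono_left sdiff_subset)), hsplit]
  ring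

lemma card_donate : #(donate M v u) = #M := by
  simpa using card_filter_donate_add (M := M) (v := v) (u := u) fun _ => True

lemma not_isDiag_of_mem_donate (hM : ∀ e ∈ M, ¬ e.IsDiag) :
    ∀ e ∈ donate M v u, ¬ e.IsDiag := by
  intro e he
  rcases mem_union.1 he with he | he
  · exact hM e (mem_sdiff.1 he).1
  · obtain ⟨s, hs, rfl⟩ := mem_image.1 he
    exact Sym2.mk_isDiag_iff.not.2 (mem_donorSet.1 hs).2.1

lemma maskDeg_donate_add (x : Fin n) :
    maskDeg (donate M v u) x + #((donorSet M v u).filter fun s => x = s ∨ x = v) =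
      maskDeg M x + #((donorSet M v u).filter fun s => x = s ∨ x = u) := by
  simpa [maskDeg] using card_filter_donate_add (M := M) (v := v) (u := u) (x ∈ ·)

lemma maskDeg_donate_target (huv : u ≠ v) :
    maskDeg (donate M v u) u = maskDeg M u + #(donorSet M v u) := by
  have := maskDeg_donate_add (M := M) (v := v) (u := u) u
  rw [filter_false_of_mem fun s hs h => ?_, filter_true_of_mem fun s _ => Or.inr rfl] at this
  · simpa using this
  · rcases h with rfl | rfl
    exacts [(mem_donorSet.1 hs).2.1 rfl, huv rfl]

lemma maskDeg_donate_source (huv : u ≠ v) :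
    maskDeg (donate M v u) v + #(donorSet M v u) = maskDeg M v := by
  have := maskDeg_donate_add (M := M) (v := v) (u := u) v
  rw [filter_true_of_mem fun s _ => Or.inr rfl, filter_false_of_mem fun s hs h => ?_] at this
  · simpa using this
  · rcases h with rfl | rfl
    exacts [(mem_donorSet.1 hs).1 rfl, huv rfl]

lemma maskDeg_donate_of_ne {x : Fin n} (hxu : x ≠ u) (hxv : x ≠ v) :
    maskDeg (donate M v u) x = maskDeg M x := by
  simpa [hxu, hxv] using maskDeg_donate_add (M := M) (v := v) (u := u) x

lemma Phi_donate_add (T : Finset (Fin n)) :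
    Phi (donate M v u) T + (if v ∈ T then (#((donorSet M v u).filter (· ∈ T)) : ℝ) else 0) =
      Phi M T + (if u ∈ T then (#((donorSet M v u).filter (· ∈ T)) : ℝ) else 0) := by
  have := card_filter_donate_add (M := M) (v := v) (u := u) (edgeIn T)
  simp only [edgeIn_mk] at this
  rw [Phi_eq_card, Phi_eq_card]
  split_ifs with hv hu hu <;> simp [hv, hu] at this ⊢ <;> exact_mod_cast this

lemma map_swap_mem_of_mem_donate (hM : ∀ e ∈ M, ¬ e.IsDiag) {e : Sym2 (Fin n)}
    (he : e ∈ donate M v u) (hu : u ∉ e) : e.map (Equiv.swap u v) ∈ M := by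
  obtain ⟨heM, heX⟩ := mem_sdiff.1 <| (mem_union.1 he).resolve_right fun he => by
    obtain ⟨s, -, rfl⟩ := mem_image.1 he
    exact hu (Sym2.mem_mk_right s u)
  by_cases hv : v ∈ e
  · obtain ⟨s, rfl⟩ := Sym2.mem_iff_exists.1 hv
    have hsv : s ≠ v := fun h => hM _ heM (Sym2.mk_isDiag_iff.2 h.symm)
    have hsu : s ≠ u := fun h => hu (h ▸ Sym2.mem_mk_right v s)
    rw [Sym2.map_mk, Equiv.swap_apply_right, Equiv.swap_apply_of_ne_of_ne hsu hsv]
    -- the edge `vs` survived the donation only because `s` was not a donor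
    by_contra hsuM
    exact heX (mem_image.2 ⟨s, mem_donorSet.2 ⟨hsv, hsu, Sym2.eq_swap ▸ heM,
      Sym2.eq_swap ▸ hsuM⟩, Sym2.eq_swap⟩)
  · have hfix : e.map (Equiv.swap u v) = e.map fun x => x :=
      Sym2.map_congr fun x hx => Equiv.swap_apply_of_ne_of_ne
        (by rintro rfl; exact hu hx) (by rintro rfl; exact hv hx)
    rwa [hfix, Sym2.map_id']

lemma Phi_donate_le_Phi_swap (hM : ∀ e ∈ M, ¬ e.IsDiag) {T : Finset (Fin n)} (hu : u ∉ T) :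
    Phi (donate M v u) T ≤ Phi M (T.map (Equiv.swap u v).toEmbedding) := by
  rw [Phi_eq_card, Phi_eq_card, Nat.cast_le]
  refine card_le_card_of_injOn (Sym2.map (Equiv.swap u v)) (fun e he => ?_)
    (Sym2.map.injective (Equiv.injective _)).injOn
  obtain ⟨heN, heT⟩ := mem_filter.1 he
  refine mem_filter.2 ⟨map_swap_mem_of_mem_donate hM heN fun h => hu (heT u h), ?_⟩
  intro x hx
  obtain ⟨a, ha, rfl⟩ := Sym2.mem_map.1 hx
  exact mem_map_of_mem _ (heT a ha)

lemma Phi_nonneg (M : Finset (Sym2 (Fin n))) (T : Finset (Fin n)) : 0 ≤ Phi M T := by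
  rw [Phi_eq_card]
  positivity

lemma Phi_donate_of_iff {T : Finset (Fin n)} (h : u ∈ T ↔ v ∈ T) :
    Phi (donate M v u) T = Phi M T := by
  simpa [h] using Phi_donate_add (M := M) (v := v) (u := u) T

lemma pow_add_pow_swap_le_of_mem_of_notMem (hM : ∀ e ∈ M, ¬ e.IsDiag) {T : Finset (Fin n)}
    (hu : u ∈ T) (hv : v ∉ T) (d : ℕ) :
    Phi M T ^ d + Phi M (T.map (Equiv.swap u v).toEmbedding) ^ d ≤
      Phi (donate M v u) T ^ d +
        Phi (donate M v u) (T.map (Equiv.swap u v).toEmbedding) ^ d := by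
  set T' := T.map (Equiv.swap u v).toEmbedding
  have hδ : (donorSet M v u).filter (· ∈ T') = (donorSet M v u).filter (· ∈ T) :=
    filter_congr fun s hs =>
      mem_map_swap_of_ne (mem_donorSet.1 hs).2.1 (mem_donorSet.1 hs).1
  have hT := Phi_donate_add (M := M) (v := v) (u := u) T
  have hT' := Phi_donate_add (M := M) (v := v) (u := u) T'
  rw [if_neg hv, if_pos hu] at hT
  rw [if_pos (mem_map_swap_right.2 hu), if_neg (mem_map_swap_left.not.2 hv), hδ] at hT'
  have hle := Phi_donate_le_Phi_swap (v := v) hM (mem_map_swap_left.not.2 hv) (T := T')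
  rw [map_swap_map_swap] at hle
  rw [add_zero] at hT hT'
  rw [hT, ← hT']
  exact pow_add_add_pow_le (Phi_nonneg _ _) hle (Nat.cast_nonneg _) d

lemma pow_add_pow_swap_le (hM : ∀ e ∈ M, ¬ e.IsDiag) (T : Finset (Fin n)) (d : ℕ) :
    Phi M T ^ d + Phi M (T.map (Equiv.swap u v).toEmbedding) ^ d ≤
      Phi (donate M v u) T ^ d +
        Phi (donate M v u) (T.map (Equiv.swap u v).toEmbedding) ^ d := by
  by_cases h : u ∈ T ↔ v ∈ T
  · have h' : u ∈ T.map (Equiv.swap u v).toEmbedding ↔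
        v ∈ T.map (Equiv.swap u v).toEmbedding := by
      rw [mem_map_swap_left, mem_map_swap_right, h]
    rw [Phi_donate_of_iff h, Phi_donate_of_iff h']
  by_cases hu : u ∈ T
  · exact pow_add_pow_swap_le_of_mem_of_notMem hM hu (by tauto) d
  · have := pow_add_pow_swap_le_of_mem_of_notMem hM (T := T.map (Equiv.swap u v).toEmbedding)
      (mem_map_swap_left.2 (by tauto)) (mem_map_swap_right.not.2 hu) d
    rw [map_swap_map_swap] at this
    linarith

lemma LDUB_le_LDUB_donate (hM : ∀ e ∈ M, ¬ e.IsDiag) (k D : ℕ) :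
    LDUB n k D M ≤ LDUB n k D (donate M v u) := by
  unfold LDUB
  refine add_le_add_right (sum_le_sum fun d _ => ?_) 1
  refine mul_le_mul_of_nonneg_left ?_ (by positivity)
  exact cliqueExp_inter_le_of_symmetrize (f := fun W => Phi M W ^ d)
    (g := fun W => Phi (donate M v u) W ^ d) (Equiv.swap u v)
    fun W => pow_add_pow_swap_le hM W d

end Donation

section VertexCount

variable {n : ℕ} {M : Finset (Sym2 (Fin n))} {t : ℕ}

lemma sum_maskDeg_le (M : Finset (Sym2 (Fin n))) : ∑ w, maskDeg M w ≤ 2 * #M := by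
  calc ∑ w, maskDeg M w = ∑ e ∈ M, #(univ.filter (· ∈ e)) :=
        sum_card_bipartiteAbove_eq_sum_card_bipartiteBelow _
    _ ≤ ∑ _e ∈ M, 2 := sum_le_sum fun e _ => by
        rw [show univ.filter (· ∈ e) = e.toFinset by ext; simp, Sym2.card_toFinset]
        split_ifs <;> simp
    _ = 2 * #M := by rw [sum_const, smul_eq_mul, mul_comm]

lemma card_lt_maskDeg_mul_le (M : Finset (Sym2 (Fin n))) (t : ℕ) :
    #(univ.filter fun w => t < maskDeg M w) * t ≤ 2 * #M :=
  calc _ ≤ ∑ w ∈ univ.filter fun w => t < maskDeg M w, maskDeg M w := by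
        rw [← smul_eq_mul]
        exact card_nsmul_le_sum _ _ _ fun w hw => (mem_filter.1 hw).2.le
    _ ≤ ∑ w, maskDeg M w := sum_le_sum_of_subset (filter_subset _ _)
    _ ≤ 2 * #M := sum_maskDeg_le M

def IsDonationStable (t : ℕ) (M : Finset (Sym2 (Fin n))) : Prop :=
  ∀ u v, u ≠ v → maskDeg M u ≤ t → maskDeg M v ≤ t → maskDeg M v ≤ maskDeg M u →
    donorSet M v u = ∅

lemma card_le_maskDeg_add_one {s₀ v : Fin n} (hs₀v : s₀ ≠ v) (hM : s(s₀, v) ∈ M)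
    {S : Finset (Fin n)} (hS : ∀ u ∈ S, u ≠ v → donorSet M v u = ∅) :
    #S ≤ maskDeg M s₀ + 1 := by
  -- `s₀` is a neighbour of every other vertex of `S`, since it does not donate to it
  have hsub : ((S.erase v).erase s₀).image (fun u => s(s₀, u)) ⊆
      (M.filter (s₀ ∈ ·)).erase s(s₀, v) := by
    intro e he
    obtain ⟨u, hu, rfl⟩ := mem_image.1 he
    obtain ⟨hus, huv, huS⟩ : u ≠ s₀ ∧ u ≠ v ∧ u ∈ S := by simpa using hu
    refine mem_erase.2 ⟨fun h => huv (Sym2.congr_right.1 h),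
      mem_filter.2 ⟨?_, Sym2.mem_mk_left _ _⟩⟩
    by_contra h
    have : s₀ ∈ donorSet M v u := mem_donorSet.2 ⟨hs₀v, Ne.symm hus, hM, h⟩
    simp [hS u huS huv] at this
  have hmem : s(s₀, v) ∈ M.filter (s₀ ∈ ·) := mem_filter.2 ⟨hM, Sym2.mem_mk_left _ _⟩
  have := card_le_card hsub
  rw [card_image_of_injective _ fun _ _ => Sym2.congr_right.1, card_erase_of_mem hmem] at this
  have h1 := pred_card_le_card_erase (s := S) (a := v)
  have h2 := pred_card_le_card_erase (s := S.erase v) (a := s₀)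
  have h3 := card_pos.2 ⟨_, hmem⟩
  unfold maskDeg
  omega

lemma card_filter_pos_maskDeg_le (hM : ∀ e ∈ M, ¬ e.IsDiag)
    (hdeg : ∀ w, maskDeg M w ≤ 2 * t) (hst : IsDonationStable t M) :
    #(univ.filter fun w => 0 < maskDeg M w ∧ maskDeg M w ≤ t) ≤ 2 * t + 1 := by
  set L := univ.filter fun w => 0 < maskDeg M w ∧ maskDeg M w ≤ t
  obtain hL | hL := L.eq_empty_or_nonempty
  · simp [hL]
  obtain ⟨v, hvL, hvmin⟩ := exists_min_image L (maskDeg M) hL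
  obtain ⟨hvpos, hvt⟩ := (mem_filter.1 hvL).2
  obtain ⟨e, he⟩ := card_pos.1 hvpos
  obtain ⟨heM, hve⟩ := mem_filter.1 he
  obtain ⟨s₀, rfl⟩ := Sym2.mem_iff_exists.1 hve
  have hs₀v : s₀ ≠ v := fun h => hM _ heM (Sym2.mk_isDiag_iff.2 h.symm)
  refine (card_le_maskDeg_add_one hs₀v (Sym2.eq_swap ▸ heM) fun u hu huv => ?_).trans
    (by linarith [hdeg s₀])
  exact hst u v huv (mem_filter.1 hu).2.2 hvt (hvmin u hu)

lemma card_maskVerts_le_of_isDonationStable (hM : ∀ e ∈ M, ¬ e.IsDiag)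
    (hdeg : ∀ w, maskDeg M w ≤ 2 * t) (hst : IsDonationStable t M) :
    #(maskVerts M) ≤ 2 * t + 1 + #(univ.filter fun w => t < maskDeg M w) := by
  have hsub : maskVerts M ⊆ (univ.filter fun w => 0 < maskDeg M w ∧ maskDeg M w ≤ t) ∪
      univ.filter fun w => t < maskDeg M w := by
    intro w hw
    have := mem_maskVerts_iff.1 hw
    simp only [mem_union, mem_filter, mem_univ, true_and]
    omega
  calc _ ≤ _ := card_le_card hsub
    _ ≤ _ := card_union_le _ _
    _ ≤ _ := by gcongr; exact card_filter_pos_maskDeg_le hM hdeg hst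

end VertexCount

section Potential

variable {n : ℕ} {M : Finset (Sym2 (Fin n))} {u v : Fin n} {t : ℕ}

lemma maskDeg_donate_le (huv : u ≠ v) (hut : maskDeg M u ≤ t) (hvt : maskDeg M v ≤ t)
    (hdeg : ∀ w, maskDeg M w ≤ 2 * t) (w : Fin n) : maskDeg (donate M v u) w ≤ 2 * t := by
  have hu := maskDeg_donate_target (M := M) huv
  have hv := maskDeg_donate_source (M := M) huv
  by_cases hwu : w = u
  · subst hwu
    omega
  by_cases hwv : w = v
  · subst hwv
    omega
  rw [maskDeg_donate_of_ne hwu hwv]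
  exact hdeg w

lemma sum_sq_maskDeg_lt_donate (huv : u ≠ v) (hvu : maskDeg M v ≤ maskDeg M u)
    (hD : (donorSet M v u).Nonempty) :
    ∑ w, maskDeg M w ^ 2 < ∑ w, maskDeg (donate M v u) w ^ 2 := by
  have hsplit : ∀ N : Finset (Sym2 (Fin n)), ∑ w, maskDeg N w ^ 2 =
      maskDeg N u ^ 2 + maskDeg N v ^ 2 + ∑ w ∈ (univ.erase u).erase v, maskDeg N w ^ 2 := by
    intro N
    rw [add_assoc, add_sum_erase _ (fun w => maskDeg N w ^ 2)
      (mem_erase.2 ⟨huv.symm, mem_univ v⟩),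
      add_sum_erase _ (fun w => maskDeg N w ^ 2) (mem_univ u)]
  have hrest : ∑ w ∈ (univ.erase u).erase v, maskDeg (donate M v u) w ^ 2 =
      ∑ w ∈ (univ.erase u).erase v, maskDeg M w ^ 2 := by
    refine sum_congr rfl fun w hw => ?_
    obtain ⟨hwv, hwu⟩ : w ≠ v ∧ w ≠ u := by simpa using hw
    rw [maskDeg_donate_of_ne hwu hwv]
  rw [hsplit M, hsplit (donate M v u), hrest]
  have hu := maskDeg_donate_target (M := M) huv
  have hv := maskDeg_donate_source (M := M) huv
  have hpos := card_pos.2 hD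
  nlinarith

lemma exists_isDonationStable (k D : ℕ) (hM : ∀ e ∈ M, ¬ e.IsDiag)
    (hdeg : ∀ w, maskDeg M w ≤ 2 * t) :
    ∃ N : Finset (Sym2 (Fin n)), LDUB n k D M ≤ LDUB n k D N ∧ #N = #M ∧
      (∀ e ∈ N, ¬ e.IsDiag) ∧ (∀ w, maskDeg N w ≤ 2 * t) ∧ IsDonationStable t N := by
  set C := univ.filter fun N : Finset (Sym2 (Fin n)) => LDUB n k D M ≤ LDUB n k D N ∧
    #N = #M ∧ (∀ e ∈ N, ¬ e.IsDiag) ∧ ∀ w, maskDeg N w ≤ 2 * t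
  obtain ⟨N, hN, hmax⟩ := exists_max_image C (fun N => ∑ w, maskDeg N w ^ 2)
    ⟨M, mem_filter.2 ⟨mem_univ _, le_rfl, rfl, hM, hdeg⟩⟩
  obtain ⟨hMN, hcard, hNd, hNdeg⟩ := (mem_filter.1 hN).2
  refine ⟨N, hMN, hcard, hNd, hNdeg, fun u v huv hut hvt hvu => ?_⟩
  by_contra hD
  have hmem : donate N v u ∈ C := mem_filter.2 ⟨mem_univ _,
    hMN.trans (LDUB_le_LDUB_donate hNd k D), card_donate.trans hcard,
    not_isDiag_of_mem_donate hNd, maskDeg_donate_le huv hut hvt hNdeg⟩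
  exact (hmax _ hmem).not_gt (sum_sq_maskDeg_lt_donate huv hvu (nonempty_iff_ne_empty.2 hD))

end Potential

theorem remove_most_vertices_general {n : ℕ} (k D t : ℕ) (ht : 0 < t)
    (M : Finset (Sym2 (Fin n))) (hMnd : ∀ e ∈ M, ¬ e.IsDiag)
    (hdeg : ∀ v ∈ maskVerts M, maskDeg M v ≤ 2 * t) :
    ∃ M' : Finset (Sym2 (Fin n)),
      LDUB n k D M ≤ LDUB n k D M' ∧
      ((maskVerts M').card : ℝ) ≤ 2 * (t : ℝ) + 2 + 2 * (M.card : ℝ) / (t : ℝ) := by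
  have hdeg' : ∀ w, maskDeg M w ≤ 2 * t := fun w => by
    by_cases hw : w ∈ maskVerts M
    · exact hdeg w hw
    · rw [mem_maskVerts_iff, not_lt, Nat.le_zero] at hw
      simp [hw]
  obtain ⟨N, hMN, hcard, hN, hNdeg, hst⟩ := exists_isDonationStable k D hMnd hdeg'
  refine ⟨N, hMN, ?_⟩
  have hV := card_maskVerts_le_of_isDonationStable hN hNdeg hst
  have hH := card_lt_maskDeg_mul_le N t
  rw [hcard] at hH
  have hH' : (#(univ.filter fun w => t < maskDeg N w) : ℝ) ≤ 2 * #M / t := by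
    rw [le_div_iff₀ (by exact_mod_cast ht)]
    exact_mod_cast hH
  have hV' : (#(maskVerts N) : ℝ) ≤ 2 * t + 1 + #(univ.filter fun w => t < maskDeg N w) := by
    exact_mod_cast hV
  linarith

/-- Any mask `M` with maximum mask degree at most `2t` has
its `LDUB` dominated by that of a mask `M'` with few vertices:
`|V(M')| ≤ 2t + 2 + 2|M|/t`. -/
theorem remove_most_vertices {n : ℕ} (k D t : ℕ) (hn : 0 < n) (hk : 0 < k)
    (hkn : k ≤ n) (hD : 0 < D) (ht : 0 < t)
    (M : Finset (Sym2 (Fin n))) (hMnd : ∀ e ∈ M, ¬ e.IsDiag)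
    (hdeg : ∀ v ∈ maskVerts M, maskDeg M v ≤ 2 * t) :
    ∃ M' : Finset (Sym2 (Fin n)),
      LDUB n k D M ≤ LDUB n k D M' ∧
      ((maskVerts M').card : ℝ) ≤ 2 * (t : ℝ) + 2 + 2 * (M.card : ℝ) / (t : ℝ) :=
  remove_most_vertices_general k D t ht M hMnd hdeg

end PlantedCliqueLD
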